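/- arXiv:0711.3759 — 2 statements merged into one kernel-verified Lean document; each statement's English description precedes it below -/
import Mathlib

section
/- (Proposition 2.4, second part.) Fix t_0 ∈ ℂ, an integer k ≥ 2, and a nonempty proper subset F ⊊ {1,…,n} such that: rank M^i_k(t_0) ≤ k and rank M^i_{k-1}(t_0) = k for every i ∈ F (i.e. p_i ∈ Φ_k(C_i) ∖ Φ_{k−1}(C_i)), and rank M^i_k(t_0) = k+1 for every i ∉ F (i.e. p_i ∉ Φ_k(C_i)). Then for every s ∈ {1,…,n} and all scalars u_i ∈ ℂ (i ≠ s): rank M^{X,s}_k(t_0, u) ≤ nk if and only if {s} ∪ {i ≠ s : u_i ≠ 0} ⊆ F. (Geometrically: Φ_k(X) ∩ f_p = ⟨p_i : i ∈ F⟩.) -/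
open Matrix

/-- The `k`-th jet matrix `M^i_k(t)` of a parametrized curve. -/
noncomputable def curveJet (r : ℕ) (a : ℂ → Fin (r + 1) → ℂ) (k : ℕ) (t : ℂ) :
    Matrix (Fin (k + 1)) (Fin (r + 1)) ℂ :=
  Matrix.of fun l j => iteratedDeriv (l : ℕ) (fun s => a s j) t

/-- The `i`-th block inclusion `ι_i : ℂ^{r_i+1} → V`. -/
noncomputable def blockIncl {n : ℕ} (r : Fin n → ℕ) (i : Fin n)
    (v : Fin (r i + 1) → ℂ) : (Σ j : Fin n, Fin (r j + 1)) → ℂ :=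
  fun p => if h : p.1 = i then v (Fin.cast (by rw [h]) p.2) else 0

/-- The `k`-th jet matrix `M^{X,s}_k(t,u)` of the decomposable scroll. -/
noncomputable def scrollJet {n : ℕ} (r : Fin n → ℕ)
    (a : ∀ i : Fin n, ℂ → Fin (r i + 1) → ℂ) (k : ℕ) (s : Fin n) (t : ℂ)
    (u : Fin n → ℂ) :
    Matrix (Fin (k + 1) ⊕ ({i : Fin n // i ≠ s} × Fin k))
      (Σ j : Fin n, Fin (r j + 1)) ℂ :=
  Matrix.of fun row =>
    match row with
    | Sum.inl l =>
        blockIncl r s (curveJet (r s) (a s) k t l) +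
          ∑ i ∈ Finset.univ.filter (fun i => i ≠ s),
            u i • blockIncl r i (curveJet (r i) (a i) k t l)
    | Sum.inr q =>
        blockIncl r q.1.1 (curveJet (r q.1.1) (a q.1.1) k t q.2.castSucc)

/-- The row space of a matrix, i.e. the span of its rows. -/
noncomputable def rowSpace {m α : Type*} [Fintype m] (M : Matrix m α ℂ) : Submodule ℂ (α → ℂ) :=
  Submodule.span ℂ (Set.range fun i => M i)

/-!
Write `R_i` for the span of the first `k` derivative rows of `C_i`, the cone over `Osc^{k-1}_{p_i}(C_i)`.
The hypotheses say exactly that `dim R_i = k` for every `i`, and that the `k`-th derivative row of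
`C_i` lies in `R_i` iff `i ∈ F`. All rows of `M^{X,s}_k(t₀,u)` but the last of the first block lie
in `U = ⊕ ι_i(R_i)`, and conversely they span `U`, so the row space is `U + ℂ v` with `v` that last
row, and `dim U = nk`. Hence the rank is `≤ nk` iff `v ∈ U`, i.e. iff every block `λ_i · a^{i(k)}(t₀)`
of `v` (with `λ_s = 1`, `λ_i = u_i`) lies in `R_i`, which is the support condition on `F`.
-/

open Submodule Module

section LinearAlgebra

variable {K V : Type*} [Field K] [AddCommGroup V] [Module K V] [FiniteDimensional K V]

lemma Submodule.finrank_sup_span_singleton_le (A : Submodule K V) (x : V) :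
    finrank K ↥(A ⊔ K ∙ x) ≤ finrank K A + 1 :=
  (finrank_add_le_finrank_add_finrank A _).trans
    (Nat.add_le_add_left (by simpa using finrank_span_le_card ({x} : Set V)) _)

lemma Submodule.finrank_sup_span_singleton_le_iff (A : Submodule K V) (x : V) :
    finrank K ↥(A ⊔ K ∙ x) ≤ finrank K A ↔ x ∈ A := by
  refine ⟨fun h => ?_, fun hx => by rw [sup_eq_left.mpr ((span_singleton_le_iff_mem x A).mpr hx)]⟩
  by_contra hx
  have hlt : A < A ⊔ K ∙ x :=
    lt_of_le_of_ne le_sup_left fun he => hx (he ▸ mem_sup_right (mem_span_singleton_self x))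
  exact (finrank_lt_finrank_of_lt hlt).not_ge h

end LinearAlgebra

lemma Matrix.rank_eq_finrank_rowSpace {m α : Type*} [Fintype m] [Fintype α] (M : Matrix m α ℂ) :
    M.rank = finrank ℂ (rowSpace M) :=
  rank_eq_finrank_span_row M

section Curve

variable {r : ℕ} (a : ℂ → Fin (r + 1) → ℂ) (t : ℂ)

noncomputable def jetRow (l : ℕ) : Fin (r + 1) → ℂ :=
  fun j => iteratedDeriv l (fun s => a s j) t

noncomputable def jetSpan (k : ℕ) : Submodule ℂ (Fin (r + 1) → ℂ) :=
  span ℂ (Set.range fun l : Fin k => jetRow a t l)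

variable {a t}

lemma jetRow_mem_jetSpan {k m : ℕ} (hm : m < k) : jetRow a t m ∈ jetSpan a t k :=
  subset_span ⟨⟨m, hm⟩, rfl⟩

variable (a t)

lemma rank_curveJet (k : ℕ) : (curveJet r a k t).rank = finrank ℂ (jetSpan a t (k + 1)) :=
  rank_eq_finrank_span_row _

lemma jetSpan_succ (k : ℕ) : jetSpan a t (k + 1) = jetSpan a t k ⊔ ℂ ∙ jetRow a t k := by
  have hsnoc : (fun l : Fin (k + 1) => jetRow a t l) =
      Fin.snoc (fun l : Fin k => jetRow a t l) (jetRow a t k) := by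
    funext l
    induction l using Fin.lastCases <;> simp
  rw [jetSpan, hsnoc, Fin.range_snoc, span_insert, sup_comm, jetSpan]

lemma finrank_jetSpan_le (k : ℕ) : finrank ℂ (jetSpan a t k) ≤ k :=
  (finrank_range_le_card _).trans_eq (Fintype.card_fin k)

variable {a t}

lemma finrank_jetSpan_of_rank_curveJet_eq_succ {k : ℕ} (h : (curveJet r a k t).rank = k + 1) :
    finrank ℂ (jetSpan a t k) = k := by
  have hsucc := finrank_sup_span_singleton_le (jetSpan a t k) (jetRow a t k)
  rw [← jetSpan_succ, ← rank_curveJet, h] at hsucc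
  exact le_antisymm (finrank_jetSpan_le a t k) (by omega)

lemma finrank_jetSpan_of_rank_curveJet_pred {k : ℕ} (h : (curveJet r a (k - 1) t).rank = k) :
    finrank ℂ (jetSpan a t k) = k := by
  cases k with
  | zero => exact Nat.le_zero.mp (finrank_jetSpan_le a t 0)
  | succ k => rwa [rank_curveJet] at h

lemma jetRow_mem_jetSpan_iff {k : ℕ} (h : finrank ℂ (jetSpan a t k) = k) :
    jetRow a t k ∈ jetSpan a t k ↔ (curveJet r a k t).rank ≤ k := by
  rw [rank_curveJet, jetSpan_succ, ← finrank_sup_span_singleton_le_iff, h]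

end Curve

section Blocks

variable {n : ℕ} (r : Fin n → ℕ)

noncomputable def blockInclLin (i : Fin n) :
    (Fin (r i + 1) → ℂ) →ₗ[ℂ] (Σ j : Fin n, Fin (r j + 1)) → ℂ where
  toFun := blockIncl r i
  map_add' v w := by
    funext p
    simp only [blockIncl, Pi.add_apply]
    split <;> simp
  map_smul' c v := by
    funext p
    simp only [blockIncl, Pi.smul_apply, RingHom.id_apply]
    split <;> simp

noncomputable def blockProj (i : Fin n) :
    ((Σ j : Fin n, Fin (r j + 1)) → ℂ) →ₗ[ℂ] Fin (r i + 1) → ℂ :=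
  LinearMap.funLeft ℂ ℂ (Sigma.mk (β := fun j => Fin (r j + 1)) i)

@[simp] lemma blockProj_blockInclLin_self (i : Fin n) (v : Fin (r i + 1) → ℂ) :
    blockProj r i (blockInclLin r i v) = v := by
  funext p
  simp [blockProj, blockInclLin, blockIncl, LinearMap.funLeft]

@[simp] lemma blockProj_blockInclLin_of_ne {i j : Fin n} (h : j ≠ i) (v : Fin (r i + 1) → ℂ) :
    blockProj r j (blockInclLin r i v) = 0 := by
  funext p
  simp [blockProj, blockInclLin, blockIncl, LinearMap.funLeft, h]

lemma blockProj_sum_blockInclLin (v : ∀ i, Fin (r i + 1) → ℂ) (j : Fin n) :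
    blockProj r j (∑ i, blockInclLin r i (v i)) = v j := by
  rw [map_sum, Finset.sum_eq_single j (fun i _ hij => blockProj_blockInclLin_of_ne r hij.symm _)
    (by simp), blockProj_blockInclLin_self]

lemma sum_blockInclLin_blockProj (x : (Σ j : Fin n, Fin (r j + 1)) → ℂ) :
    ∑ i, blockInclLin r i (blockProj r i x) = x := by
  funext ⟨j, q⟩
  rw [Finset.sum_apply, Finset.sum_eq_single j]
  · simp [blockInclLin, blockProj, blockIncl, LinearMap.funLeft]
  · intro i _ hij
    simp [blockInclLin, blockProj, blockIncl, LinearMap.funLeft, hij.symm]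
  · simp

/-- The direct sum `⊕ ι_i(W_i)` of subspaces of the blocks. -/
noncomputable def blockSubmodule (W : ∀ i, Submodule ℂ (Fin (r i + 1) → ℂ)) :
    Submodule ℂ ((Σ j : Fin n, Fin (r j + 1)) → ℂ) :=
  ⨅ i, (W i).comap (blockProj r i)

variable {r}

lemma mem_blockSubmodule {W : ∀ i, Submodule ℂ (Fin (r i + 1) → ℂ)}
    {x : (Σ j : Fin n, Fin (r j + 1)) → ℂ} :
    x ∈ blockSubmodule r W ↔ ∀ i, blockProj r i x ∈ W i := by
  simp only [blockSubmodule, mem_iInf, mem_comap]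

lemma finrank_blockSubmodule (W : ∀ i, Submodule ℂ (Fin (r i + 1) → ℂ)) :
    finrank ℂ (blockSubmodule r W) = ∑ i, finrank ℂ (W i) := by
  let Ψ : (∀ i, W i) →ₗ[ℂ] (Σ j : Fin n, Fin (r j + 1)) → ℂ :=
    ∑ i, blockInclLin r i ∘ₗ (W i).subtype ∘ₗ LinearMap.proj i
  have hΨ (y : ∀ i, W i) (j : Fin n) : blockProj r j (Ψ y) = y j := by
    simpa [Ψ] using blockProj_sum_blockInclLin r (fun i => (y i : Fin (r i + 1) → ℂ)) j
  have hrange : LinearMap.range Ψ = blockSubmodule r W := by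
    refine le_antisymm ?_ fun x hx => ?_
    · rintro _ ⟨y, rfl⟩
      exact mem_blockSubmodule.mpr fun i => by rw [hΨ]; exact (y i).2
    · refine ⟨fun i => ⟨blockProj r i x, mem_blockSubmodule.mp hx i⟩, ?_⟩
      simpa [Ψ] using sum_blockInclLin_blockProj r x
  have hinj : Function.Injective Ψ := fun y y' h =>
    funext fun i => Subtype.ext (by rw [← hΨ y i, ← hΨ y' i, h])
  rw [← hrange, LinearMap.finrank_range_of_inj hinj, finrank_pi_fintype]

end Blocks

lemma forall_update_smul_mem_iff {K ι : Type*} [Field K] [DecidableEq ι] {M : ι → Type*}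
    [∀ i, AddCommGroup (M i)] [∀ i, Module K (M i)] (W : ∀ i, Submodule K (M i))
    (x : ∀ i, M i) (u : ι → K) (s : ι) :
    (∀ i, Function.update u s 1 i • x i ∈ W i) ↔ x s ∈ W s ∧ ∀ i, i ≠ s → u i ≠ 0 → x i ∈ W i := by
  refine ⟨fun h => ⟨by simpa using h s, fun i hi hui => ?_⟩, fun ⟨hs, hu⟩ i => ?_⟩
  · exact (smul_mem_iff _ hui).mp (by simpa [hi] using h i)
  · by_cases hi : i = s
    · subst hi
      simpa using hs
    · rw [Function.update_of_ne hi]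
      by_cases hui : u i = 0
      · simp [hui]
      · exact smul_mem _ _ (hu i hi hui)

section Scroll

variable {n : ℕ} {r : Fin n → ℕ} {a : ∀ i : Fin n, ℂ → Fin (r i + 1) → ℂ} {k : ℕ} {s : Fin n}
  {t : ℂ} {u : Fin n → ℂ}

/-- `Function.update u s 1` is the vector of fibre coordinates `λ`. -/
lemma scrollJet_inl (l : Fin (k + 1)) :
    scrollJet r a k s t u (Sum.inl l) =
      ∑ i, Function.update u s 1 i • blockInclLin r i (jetRow (a i) t l) := by
  rw [Fintype.sum_eq_add_sum_compl s, Function.update_self, one_smul,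
    show ({s}ᶜ : Finset (Fin n)) = Finset.univ.filter (· ≠ s) by ext; simp]
  change blockInclLin r s (jetRow (a s) t l) + _ = _
  congr 1
  refine Finset.sum_congr rfl fun i hi => ?_
  rw [Function.update_of_ne (Finset.mem_filter.mp hi).2]
  rfl

lemma scrollJet_inr (q : {i : Fin n // i ≠ s} × Fin k) :
    scrollJet r a k s t u (Sum.inr q) = blockInclLin r q.1 (jetRow (a q.1) t q.2) := rfl

lemma blockProj_scrollJet_inl (l : Fin (k + 1)) (j : Fin n) :
    blockProj r j (scrollJet r a k s t u (Sum.inl l)) =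
      Function.update u s 1 j • jetRow (a j) t l := by
  simp_rw [scrollJet_inl, ← map_smul]
  exact blockProj_sum_blockInclLin r _ j

lemma blockInclLin_jetRow_mem_rowSpace (i : Fin n) {m : ℕ} (hm : m < k) :
    blockInclLin r i (jetRow (a i) t m) ∈ rowSpace (scrollJet r a k s t u) := by
  have hbot (j : Fin n) (hj : j ≠ s) :
      blockInclLin r j (jetRow (a j) t m) ∈ rowSpace (scrollJet r a k s t u) :=
    subset_span ⟨Sum.inr ⟨⟨j, hj⟩, ⟨m, hm⟩⟩, rfl⟩
  by_cases hi : i = s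
  · subst hi
    have htop : scrollJet r a k i t u (Sum.inl ⟨m, by omega⟩) ∈ rowSpace (scrollJet r a k i t u) :=
      subset_span ⟨_, rfl⟩
    rw [scrollJet_inl, Fintype.sum_eq_add_sum_compl i, Function.update_self, one_smul] at htop
    refine (Submodule.add_mem_iff_left _ (sum_mem fun j hj => smul_mem _ _ (hbot j ?_))).mp htop
    simpa using hj
  · exact hbot i hi

lemma blockSubmodule_jetSpan_le_rowSpace :
    blockSubmodule r (fun i => jetSpan (a i) t k) ≤ rowSpace (scrollJet r a k s t u) := by
  intro x hx
  rw [← sum_blockInclLin_blockProj r x]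
  refine sum_mem fun i _ => ?_
  have hle : jetSpan (a i) t k ≤ (rowSpace (scrollJet r a k s t u)).comap (blockInclLin r i) :=
    span_le.mpr (Set.range_subset_iff.mpr fun m => blockInclLin_jetRow_mem_rowSpace i m.isLt)
  exact hle (mem_blockSubmodule.mp hx i)

lemma rowSpace_scrollJet_le :
    rowSpace (scrollJet r a k s t u) ≤
      blockSubmodule r (fun i => jetSpan (a i) t k) ⊔
        ℂ ∙ scrollJet r a k s t u (Sum.inl (Fin.last k)) := by
  refine span_le.mpr ?_
  rintro _ ⟨l | q, rfl⟩ <;> beta_reduce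
  · by_cases hl : l = Fin.last k
    · subst hl
      exact mem_sup_right (mem_span_singleton_self _)
    · refine mem_sup_left (mem_blockSubmodule.mpr fun j => ?_)
      rw [blockProj_scrollJet_inl]
      exact smul_mem _ _ (jetRow_mem_jetSpan (Fin.val_lt_last hl))
  · refine mem_sup_left (mem_blockSubmodule.mpr fun j => ?_)
    rw [scrollJet_inr]
    by_cases hj : j = q.1
    · subst hj
      rw [blockProj_blockInclLin_self]
      exact jetRow_mem_jetSpan q.2.isLt
    · rw [blockProj_blockInclLin_of_ne r hj]
      exact zero_mem _

lemma rowSpace_scrollJet :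
    rowSpace (scrollJet r a k s t u) =
      blockSubmodule r (fun i => jetSpan (a i) t k) ⊔
        ℂ ∙ scrollJet r a k s t u (Sum.inl (Fin.last k)) :=
  le_antisymm rowSpace_scrollJet_le <| sup_le blockSubmodule_jetSpan_le_rowSpace <|
    (span_singleton_le_iff_mem _ _).mpr (subset_span ⟨_, rfl⟩)

end Scroll

theorem statement10_general {n : ℕ} (r : Fin n → ℕ)
    (a : ∀ i : Fin n, ℂ → Fin (r i + 1) → ℂ)
    (t0 : ℂ) (k : ℕ)
    (F : Finset (Fin n))
    (h1 : ∀ i ∈ F, (curveJet (r i) (a i) k t0).rank ≤ k ∧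
      (curveJet (r i) (a i) (k - 1) t0).rank = k)
    (h2 : ∀ i ∉ F, (curveJet (r i) (a i) k t0).rank = k + 1)
    (s : Fin n) (u : Fin n → ℂ) :
    (scrollJet r a k s t0 u).rank ≤ n * k ↔
      (s ∈ F ∧ ∀ i, i ≠ s → u i ≠ 0 → i ∈ F) := by
  have hdim (i : Fin n) : finrank ℂ (jetSpan (a i) t0 k) = k := by
    by_cases hi : i ∈ F
    · exact finrank_jetSpan_of_rank_curveJet_pred (h1 i hi).2
    · exact finrank_jetSpan_of_rank_curveJet_eq_succ (h2 i hi)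
  have hmem (i : Fin n) : jetRow (a i) t0 k ∈ jetSpan (a i) t0 k ↔ i ∈ F := by
    rw [jetRow_mem_jetSpan_iff (hdim i)]
    by_cases hi : i ∈ F
    · simp [hi, (h1 i hi).1]
    · simp [hi, h2 i hi]
  have hU : finrank ℂ (blockSubmodule r fun i => jetSpan (a i) t0 k) = n * k := by
    simp [finrank_blockSubmodule, hdim]
  rw [rank_eq_finrank_rowSpace, rowSpace_scrollJet, ← hU,
    finrank_sup_span_singleton_le_iff, mem_blockSubmodule]
  simp only [blockProj_scrollJet_inl, Fin.val_last]
  rw [forall_update_smul_mem_iff (fun i => jetSpan (a i) t0 k) (fun i => jetRow (a i) t0 k)]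
  simp only [hmem]

/-- Proposition 2.4, second part: if `F` is a nonempty proper subset
with `p_i ∈ Φ_k(C_i) ∖ Φ_{k-1}(C_i)` for `i ∈ F` and `p_i ∉ Φ_k(C_i)` for `i ∉ F`,
then a point of the fibre over `t0` lies in `Φ_k(X)` iff it is supported on `F`,
i.e. `Φ_k(X) ∩ f_p = ⟨p_i : i ∈ F⟩`. -/
theorem statement10 {n : ℕ} (hn : 2 ≤ n) (r : Fin n → ℕ) (hr : ∀ i, 1 ≤ r i)
    (a : ∀ i : Fin n, ℂ → Fin (r i + 1) → ℂ)
    (hent : ∀ i j, Differentiable ℂ fun t => a i t j)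
    (hnd : ∀ i t, (curveJet (r i) (a i) 1 t).rank = 2)
    (t0 : ℂ) (k : ℕ) (hk : 2 ≤ k)
    (F : Finset (Fin n)) (hF : F.Nonempty) (hFproper : F ≠ Finset.univ)
    (h1 : ∀ i ∈ F, (curveJet (r i) (a i) k t0).rank ≤ k ∧
      (curveJet (r i) (a i) (k - 1) t0).rank = k)
    (h2 : ∀ i ∉ F, (curveJet (r i) (a i) k t0).rank = k + 1)
    (s : Fin n) (u : Fin n → ℂ) :
    (scrollJet r a k s t0 u).rank ≤ n * k ↔
      (s ∈ F ∧ ∀ i, i ≠ s → u i ≠ 0 → i ∈ F) :=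
  statement10_general r a t0 k F h1 h2 s u
end

section
/- (Corollary 2.5.) Fix t_0 ∈ ℂ and an integer k ≥ 2. (i) If rank M^i_k(t_0) ≤ k for every i ∈ {1,…,n} (i.e. p_i ∈ Φ_k(C_i) for all i), then rank M^{X,s}_k(t_0, u) ≤ nk for every s ∈ {1,…,n} and all scalars u_i ∈ ℂ (i ≠ s) (i.e. the whole fibre over t_0 lies in Φ_k(X)). (ii) Conversely, if rank M^{X,s}_k(t_0, u) ≤ nk for every s and all u (i.e. the whole fibre over t_0 lies in Φ_k(X)), then rank M^i_k(t_0) ≤ k for some i (i.e. p_i ∈ Φ_k(C_i) for some i). -/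
open Matrix

/-!
(i) Every row of `M^{X,s}_k(t,u)` lies in `ι_1(Osc^k C_1) + ⋯ + ι_n(Osc^k C_n)`, a space of
dimension at most `∑ rank M^i_k(t)`.

(ii) At `u = 0`, i.e. at the point `p_s` itself, each row of `M^{X,s}_k` is supported in a
single coordinate block: the rows of `M^s_k` in block `s` and the first `k` rows of `M^i_k` in
block `i ≠ s`. If no `p_i` were a `k`-inflection point, these would be `nk + 1` linearly
independent vectors.
-/

open Module

lemma Submodule.finrank_finsetSup_le {K V ι : Type*} [DivisionRing K] [AddCommGroup V]
    [Module K V] [FiniteDimensional K V] (s : Finset ι) (W : ι → Submodule K V) :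
    finrank K ↥(s.sup W) ≤ ∑ i ∈ s, finrank K ↥(W i) := by
  classical
  induction s using Finset.cons_induction with
  | empty => simp
  | cons a s ha ih =>
    rw [Finset.sup_cons, Finset.sum_cons]
    exact (Submodule.finrank_add_le_finrank_add_finrank _ _).trans (Nat.add_le_add_left ih _)

lemma Matrix.linearIndependent_rows_of_card_le_rank {K m α : Type*} [Field K] [Fintype m]
    [Fintype α] (A : Matrix m α K) (h : Fintype.card m ≤ A.rank) : LinearIndependent K A.row := by
  rw [linearIndependent_iff_card_eq_finrank_span, Set.finrank, ← A.rank_eq_finrank_span_row]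
  exact le_antisymm h A.rank_le_card_height

section BlockInclusion

variable {n : ℕ} (r : Fin n → ℕ)

noncomputable def blockInclₗ (i : Fin n) :
    (Fin (r i + 1) → ℂ) →ₗ[ℂ] (Σ j : Fin n, Fin (r j + 1)) → ℂ where
  toFun := blockIncl r i
  map_add' v w := by
    funext p
    simp only [blockIncl, Pi.add_apply]
    split <;> simp
  map_smul' c v := by
    funext p
    simp only [blockIncl, Pi.smul_apply, RingHom.id_apply]
    split <;> simp

lemma blockIncl_apply_self (i : Fin n) (v : Fin (r i + 1) → ℂ) (j : Fin (r i + 1)) :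
    blockIncl r i v ⟨i, j⟩ = v j := by
  simp [blockIncl]

lemma blockIncl_apply_of_ne {i i' : Fin n} (h : i' ≠ i) (v : Fin (r i + 1) → ℂ)
    (j : Fin (r i' + 1)) : blockIncl r i v ⟨i', j⟩ = 0 := by
  simp [blockIncl, h]

lemma linearIndependent_blockIncl {κ : Type*} [Fintype κ] (w : ∀ i, κ → Fin (r i + 1) → ℂ)
    (hw : ∀ i, LinearIndependent ℂ (w i)) :
    LinearIndependent ℂ fun p : Fin n × κ => blockIncl r p.1 (w p.1 p.2) := by
  rw [Fintype.linearIndependent_iff]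
  rintro g hg ⟨i, l⟩
  have hblock : ∑ l, g (i, l) • w i l = 0 := by
    funext j
    have := congrFun hg ⟨i, j⟩
    simp only [Finset.sum_apply, Pi.smul_apply, Fintype.sum_prod_type] at this
    rw [Finset.sum_eq_single i (fun i' _ hi' => by simp [blockIncl_apply_of_ne r hi'.symm])
      (by simp)] at this
    simpa [blockIncl_apply_self] using this
  exact Fintype.linearIndependent_iff.mp (hw i) _ hblock l

end BlockInclusion

section Scroll

variable {n : ℕ} (r : Fin n → ℕ) (a : ∀ i : Fin n, ℂ → Fin (r i + 1) → ℂ) (k : ℕ) (t : ℂ)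

lemma rank_scrollJet_le_sum (s : Fin n) (u : Fin n → ℂ) :
    (scrollJet r a k s t u).rank ≤ ∑ i, (curveJet (r i) (a i) k t).rank := by
  set W : Fin n → Submodule ℂ ((Σ j : Fin n, Fin (r j + 1)) → ℂ) :=
    fun i => (rowSpace (curveJet (r i) (a i) k t)).map (blockInclₗ r i)
  have hmem (i : Fin n) (l : Fin (k + 1)) :
      blockIncl r i (curveJet (r i) (a i) k t l) ∈ Finset.univ.sup W :=
    Finset.le_sup (f := W) (Finset.mem_univ i)
      (Submodule.mem_map_of_mem (Submodule.subset_span ⟨l, rfl⟩))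
  have hrows : rowSpace (scrollJet r a k s t u) ≤ Finset.univ.sup W := by
    refine Submodule.span_le.mpr ?_
    rintro _ ⟨l | q, rfl⟩
    · exact Submodule.add_mem _ (hmem s l)
        (Submodule.sum_mem _ fun i _ => Submodule.smul_mem _ _ (hmem i l))
    · exact hmem q.1.1 q.2.castSucc
  calc (scrollJet r a k s t u).rank
      ≤ finrank ℂ ↥(Finset.univ.sup W) := by
        rw [rank_eq_finrank_span_row]
        exact Submodule.finrank_mono hrows
    _ ≤ ∑ i, finrank ℂ ↥(W i) := Submodule.finrank_finsetSup_le _ _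
    _ ≤ ∑ i, (curveJet (r i) (a i) k t).rank := by
        gcongr with i
        rw [rank_eq_finrank_span_row]
        exact Submodule.finrank_map_le _ _

lemma scrollJet_zero_eq_comp (s : Fin n) :
    (scrollJet r a k s t 0).row =
      (fun p : Fin n × Fin (k + 1) => blockIncl r p.1 (curveJet (r p.1) (a p.1) k t p.2)) ∘
        Sum.elim (fun l => (s, l)) (fun q => (q.1.1, q.2.castSucc)) := by
  funext x
  rcases x with l | q
  · change blockIncl r s _ + ∑ i ∈ _, (0 : Fin n → ℂ) i • _ = _
    simp
  · rfl

lemma linearIndependent_scrollJet_zero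
    (h : ∀ i, LinearIndependent ℂ (curveJet (r i) (a i) k t).row) (s : Fin n) :
    LinearIndependent ℂ (scrollJet r a k s t 0).row := by
  rw [scrollJet_zero_eq_comp]
  refine (linearIndependent_blockIncl r _ h).comp _ ?_
  rintro (l | ⟨⟨i, hi⟩, m⟩) (l' | ⟨⟨i', hi'⟩, m'⟩) hx <;>
    simp only [Sum.elim_inl, Sum.elim_inr, Prod.mk.injEq] at hx
  · rw [hx.2]
  · exact absurd hx.1.symm hi'
  · exact absurd hx.1 hi
  · obtain ⟨rfl, hm⟩ := hx
    rw [Fin.castSucc_inj.mp hm]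

lemma rank_scrollJet_zero (h : ∀ i, LinearIndependent ℂ (curveJet (r i) (a i) k t).row)
    (s : Fin n) : (scrollJet r a k s t 0).rank = n * k + 1 := by
  rw [(linearIndependent_scrollJet_zero r a k t h s).rank_matrix]
  have hs : Fintype.card {i : Fin n // i ≠ s} = n - 1 := by
    rw [Fintype.card_subtype_compl, Fintype.card_fin, Fintype.card_unique]
  simp only [Fintype.card_sum, Fintype.card_prod, Fintype.card_fin, hs]
  obtain ⟨m, rfl⟩ : ∃ m, n = m + 1 := ⟨n - 1, by have := s.pos; omega⟩
  rw [Nat.add_sub_cancel]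
  ring

end Scroll

theorem statement11_general {n : ℕ} (hn : 2 ≤ n) (r : Fin n → ℕ)
    (a : ∀ i : Fin n, ℂ → Fin (r i + 1) → ℂ)
    (t0 : ℂ) (k : ℕ) :
    ((∀ i, (curveJet (r i) (a i) k t0).rank ≤ k) →
      ∀ (s : Fin n) (u : Fin n → ℂ), (scrollJet r a k s t0 u).rank ≤ n * k) ∧
    ((∀ (s : Fin n) (u : Fin n → ℂ), (scrollJet r a k s t0 u).rank ≤ n * k) →
      ∃ i, (curveJet (r i) (a i) k t0).rank ≤ k) := by
  refine ⟨fun h s u => ?_, fun h => ?_⟩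
  · calc (scrollJet r a k s t0 u).rank
        ≤ ∑ i, (curveJet (r i) (a i) k t0).rank := rank_scrollJet_le_sum r a k t0 s u
      _ ≤ ∑ _i : Fin n, k := Finset.sum_le_sum fun i _ => h i
      _ = n * k := by simp
  · by_contra! hflex
    have hli i : LinearIndependent ℂ (curveJet (r i) (a i) k t0).row :=
      (curveJet (r i) (a i) k t0).linearIndependent_rows_of_card_le_rank
        (by simpa using hflex i)
    have := h ⟨0, by omega⟩ 0
    rw [rank_scrollJet_zero r a k t0 hli] at this
    omega

/-- Corollary 2.5: (i) if `p_i ∈ Φ_k(C_i)` for every `i`, then the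
whole fibre over `t0` lies in `Φ_k(X)`; (ii) conversely, if the whole fibre over
`t0` lies in `Φ_k(X)`, then `p_i ∈ Φ_k(C_i)` for some `i`. -/
theorem statement11 {n : ℕ} (hn : 2 ≤ n) (r : Fin n → ℕ) (hr : ∀ i, 1 ≤ r i)
    (a : ∀ i : Fin n, ℂ → Fin (r i + 1) → ℂ)
    (hent : ∀ i j, Differentiable ℂ fun t => a i t j)
    (hnd : ∀ i t, (curveJet (r i) (a i) 1 t).rank = 2)
    (t0 : ℂ) (k : ℕ) (hk : 2 ≤ k) :
    ((∀ i, (curveJet (r i) (a i) k t0).rank ≤ k) →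
      ∀ (s : Fin n) (u : Fin n → ℂ), (scrollJet r a k s t0 u).rank ≤ n * k) ∧
    ((∀ (s : Fin n) (u : Fin n → ℂ), (scrollJet r a k s t0 u).rank ≤ n * k) →
      ∃ i, (curveJet (r i) (a i) k t0).rank ≤ k) :=
  statement11_general hn r a t0 k
end
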